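/- arXiv:2101.04744 — 2 statements merged into one kernel-verified Lean document; each statement's English description precedes it below -/
import Mathlib

section
/- If T is a positive rational number and k is a positive integer, then 1 − cos(kT) > 0; consequently ∫₀ᵀ sin(kτ) dτ > 0 for all k ≥ 1. -/
open Real MeasureTheory intervalIntegral

theorem stmt_10 (T : ℚ) (hT : 0 < T) (k : ℕ) (hk : 1 ≤ k) :
    0 < 1 - Real.cos (k * (T : ℝ)) ∧ 0 < ∫ τ in (0:ℝ)..(T : ℝ), Real.sin (k * τ) := by
  have hk0 : (0:ℝ) < k := by exact_mod_cast hk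
  have hT0 : (0:ℝ) < (T:ℝ) := by exact_mod_cast hT
  have hcos : Real.cos (k * (T:ℝ)) ≠ 1 := by
    intro h
    rw [Real.cos_eq_one_iff] at h
    obtain ⟨n, hn⟩ := h
    have hn0 : n ≠ 0 := by
      rintro rfl
      simp at hn
      rcases hn with h | h
      · exact hk0.ne' (by exact_mod_cast h)
      · exact hT0.ne' (by exact_mod_cast h)
    have : Real.pi = (k * (T:ℝ)) / (2 * n) := by
      field_simp at hn ⊢
      linarith [hn]
    exact irrational_pi (this ▸ by
      exact ⟨(k * T / (2 * n) : ℚ), by push_cast; ring⟩)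
  have h1 : 0 < 1 - Real.cos (k * (T:ℝ)) :=
    sub_pos.mpr (lt_of_le_of_ne (Real.cos_le_one _) hcos)
  refine ⟨h1, ?_⟩
  have hint : (∫ τ in (0:ℝ)..(T:ℝ), Real.sin (k * τ)) = (1 - Real.cos (k * (T:ℝ))) / k := by
    have := integral_comp_mul_left (a := (0:ℝ)) (b := (T:ℝ))
      (f := fun x => Real.sin x) (c := (k:ℝ)) hk0.ne'
    rw [this]
    simp [integral_sin, smul_eq_mul]
    ring
  rw [hint]
  positivity
end

section
/- Let h: [0,T] → ℝ be continuous, nonnegative, and strictly monotonically increasing with h not identically zero, and let k be a positive integer. Then h_k = ∫₀ᵀ h(T−τ) sin(kτ) dτ > 0. -/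
open Real MeasureTheory intervalIntegral

theorem stmt_11 (T : ℝ) (hT : 0 < T) (h : ℝ → ℝ)
    (hcont : ContinuousOn h (Set.Icc 0 T))
    (hnonneg : ∀ t ∈ Set.Icc (0:ℝ) T, 0 ≤ h t)
    (hmono : StrictMonoOn h (Set.Icc 0 T))
    (hne : ∃ t ∈ Set.Icc (0:ℝ) T, h t ≠ 0)
    (k : ℕ) (hk : 1 ≤ k) :
    0 < ∫ τ in (0:ℝ)..T, h (T - τ) * Real.sin (k * τ) := by
  have hkR : (0:ℝ) < k := by exact_mod_cast hk
  set p : ℝ := π / k with hpdef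
  have hp : 0 < p := div_pos Real.pi_pos hkR
  have hkp : (k:ℝ) * p = π := by rw [hpdef]; field_simp
  -- the clamp function
  set c : ℝ → ℝ := fun τ => max 0 (min τ T) with hcdef
  have hcmem : ∀ τ, c τ ∈ Set.Icc (0:ℝ) T := fun τ =>
    ⟨le_max_left _ _, max_le hT.le (min_le_right _ _)⟩
  have hcmono : Monotone c := fun a b hab =>
    max_le_max le_rfl (min_le_min hab le_rfl)
  have hsub : ∀ τ, T - c τ ∈ Set.Icc (0:ℝ) T := fun τ =>
    ⟨by have := (hcmem τ).2; linarith, by have := (hcmem τ).1; linarith⟩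
  set G : ℝ → ℝ := fun τ => h (T - c τ) with hGdef
  have Gcont : Continuous G := by
    have : Continuous fun τ : ℝ => T - c τ :=
      continuous_const.sub (continuous_const.max (continuous_id.min continuous_const))
    exact hcont.comp_continuous this hsub
  have Ganti : Antitone G := fun a b hab =>
    hmono.monotoneOn (hsub b) (hsub a) (sub_le_sub_left (hcmono hab) T)
  have Gnonneg : ∀ τ, 0 ≤ G τ := fun τ => hnonneg _ (hsub τ)
  have GeqIcc : ∀ τ ∈ Set.Icc (0:ℝ) T, G τ = h (T - τ) := by
    intro τ hτ
    have hc : c τ = τ := by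
      simp only [hcdef]
      rw [min_eq_left hτ.2, max_eq_right hτ.1]
    simp only [hGdef, hc]
  have Geq_ge : ∀ τ, T ≤ τ → G τ = h 0 := by
    intro τ hτ
    have hc : c τ = T := by
      simp only [hcdef]
      rw [min_eq_right hτ, max_eq_right hT.le]
    simp only [hGdef, hc, sub_self]
  have hsinC : Continuous fun τ : ℝ => Real.sin ((k:ℝ) * τ) :=
    Real.continuous_sin.comp (continuous_const.mul continuous_id)
  have hint : ∀ a b : ℝ, IntervalIntegrable (fun τ => G τ * Real.sin (k * τ)) volume a b :=
    fun a b => (Gcont.mul hsinC).intervalIntegrable a b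
  have hintD : ∀ a b : ℝ,
      IntervalIntegrable (fun s => (G s - G (s + p)) * Real.sin (k * s)) volume a b :=
    fun a b => ((Gcont.sub (Gcont.comp (continuous_id.add continuous_const))).mul
      hsinC).intervalIntegrable a b
  -- key per-period identity
  have key : ∀ m : ℕ, (∫ τ in (0 + 2*(m:ℝ)*p)..(2*p + 2*(m:ℝ)*p), G τ * Real.sin (k * τ))
      = ∫ s in (0:ℝ)..p, (G (s + 2*(m:ℝ)*p) - G (s + p + 2*(m:ℝ)*p)) * Real.sin (k * s) := by
    intro m
    have hshift : ∀ x : ℝ, Real.sin ((k:ℝ) * (x + 2*(m:ℝ)*p)) = Real.sin ((k:ℝ) * x) := by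
      intro x
      rw [show (k:ℝ) * (x + 2*(m:ℝ)*p) = (k:ℝ) * x + (m:ℝ) * (2*π) by rw [← hkp]; ring]
      exact Real.sin_add_nat_mul_two_pi _ m
    have h1 := intervalIntegral.integral_comp_add_right (a := (0:ℝ)) (b := 2*p)
      (fun τ => G τ * Real.sin (k * τ)) (2*(m:ℝ)*p)
    beta_reduce at h1
    simp only [hshift] at h1
    rw [← h1]
    have hintF : ∀ a b : ℝ,
        IntervalIntegrable (fun s => G (s + 2*(m:ℝ)*p) * Real.sin (k * s)) volume a b :=
      fun a b => ((Gcont.comp (continuous_id.add continuous_const)).mul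
        hsinC).intervalIntegrable a b
    rw [← intervalIntegral.integral_add_adjacent_intervals (a := (0:ℝ)) (b := p) (c := 2*p)
      (hintF 0 p) (hintF p (2*p))]
    have hsinp : ∀ s : ℝ, Real.sin ((k:ℝ) * (s + p)) = -Real.sin ((k:ℝ) * s) := by
      intro s
      rw [show (k:ℝ) * (s + p) = (k:ℝ) * s + π by rw [← hkp]; ring, Real.sin_add_pi]
    have h2 := intervalIntegral.integral_comp_add_right (a := (0:ℝ)) (b := p)
      (fun s => G (s + 2*(m:ℝ)*p) * Real.sin (k * s)) p
    beta_reduce at h2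
    simp only [hsinp] at h2
    rw [show (∫ s in p..(2*p), G (s + 2*(m:ℝ)*p) * Real.sin (k * s))
        = ∫ s in (0 + p)..(p + p), G (s + 2*(m:ℝ)*p) * Real.sin (k * s) by norm_num [two_mul]]
    rw [← h2]
    have hg : IntervalIntegrable (fun x => G (x + p + 2*(m:ℝ)*p) * -Real.sin ((k:ℝ)*x))
        volume 0 p := by
      apply Continuous.intervalIntegrable
      have hc2 : Continuous fun x : ℝ => x + p + 2*(m:ℝ)*p :=
        (continuous_id.add continuous_const).add continuous_const
      exact (Gcont.comp hc2).mul hsinC.neg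
    rw [← intervalIntegral.integral_add (hintF 0 p) hg]
    apply intervalIntegral.integral_congr
    intro s _
    dsimp only
    ring
  -- nonnegativity of the sine on a half-period
  have hsin_nonneg : ∀ s ∈ Set.Icc (0:ℝ) p, 0 ≤ Real.sin ((k:ℝ) * s) := by
    intro s hs
    apply Real.sin_nonneg_of_nonneg_of_le_pi (mul_nonneg hkR.le hs.1)
    rw [← hkp]
    exact mul_le_mul_of_nonneg_left hs.2 hkR.le
  -- nonnegativity of each period
  have nonneg : ∀ m : ℕ,
      0 ≤ ∫ τ in (0 + 2*(m:ℝ)*p)..(2*p + 2*(m:ℝ)*p), G τ * Real.sin (k * τ) := by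
    intro m
    rw [key m]
    apply intervalIntegral.integral_nonneg hp.le
    intro s hs
    exact mul_nonneg (sub_nonneg.2 (Ganti (by linarith [hp.le]))) (hsin_nonneg s hs)
  -- strict positivity of the first period
  have strict0 : 0 < ∫ τ in (0:ℝ)..(2*p), G τ * Real.sin (k * τ) := by
    have k0 := key 0
    simp only [Nat.cast_zero, mul_zero, zero_mul, zero_add, add_zero] at k0
    rw [k0]
    set t0 := min p T with ht0def
    have ht0 : 0 < t0 := lt_min hp hT
    have ht0p : t0 ≤ p := min_le_left _ _
    rw [← intervalIntegral.integral_add_adjacent_intervals (a := (0:ℝ)) (b := t0) (c := p)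
      (hintD 0 t0) (hintD t0 p)]
    have pos1 : 0 < ∫ s in (0:ℝ)..t0, (G s - G (s + p)) * Real.sin (k * s) := by
      apply intervalIntegral.intervalIntegral_pos_of_pos_on (hintD 0 t0) _ ht0
      intro s hs
      obtain ⟨hs0, hst⟩ := hs
      have hsT : s < T := lt_of_lt_of_le hst (min_le_right _ _)
      have hsp : s < p := lt_of_lt_of_le hst (min_le_left _ _)
      apply mul_pos
      · have hGs : G s = h (T - s) := GeqIcc s ⟨hs0.le, hsT.le⟩
        have hcsp : c (s + p) = min (s + p) T := by
          simp only [hcdef]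
          exact max_eq_right (le_min (by linarith) hT.le)
        have hGsp : G (s + p) = h (T - min (s + p) T) := by
          simp only [hGdef, hcsp]
        have harg2 : T - min (s + p) T ∈ Set.Icc (0:ℝ) T := by
          constructor
          · have : min (s + p) T ≤ T := min_le_right _ _
            linarith
          · have : (0:ℝ) ≤ min (s + p) T := le_min (by linarith) hT.le
            linarith
        have harg1 : T - s ∈ Set.Icc (0:ℝ) T := ⟨by linarith, by linarith⟩
        have hlt : T - min (s + p) T < T - s := by
          have : s < min (s + p) T := lt_min (by linarith) hsT
          linarith
        have := hmono harg2 harg1 hlt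
        rw [hGs, hGsp]
        linarith
      · apply Real.sin_pos_of_pos_of_lt_pi (mul_pos hkR hs0)
        rw [← hkp]
        exact (mul_lt_mul_iff_right₀ hkR).2 hsp
    have nn2 : 0 ≤ ∫ s in t0..p, (G s - G (s + p)) * Real.sin (k * s) := by
      apply intervalIntegral.integral_nonneg ht0p
      intro s hs
      exact mul_nonneg (sub_nonneg.2 (Ganti (by linarith [hp.le])))
        (hsin_nonneg s ⟨le_trans ht0.le hs.1, hs.2⟩)
    linarith
  -- sum over N periods
  set N : ℕ := ⌈T / (2*p)⌉₊ with hNdef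
  have hN1 : 1 ≤ N := Nat.one_le_ceil_iff.2 (div_pos hT (by linarith))
  have hTN : T ≤ 2*(N:ℝ)*p := by
    have h1 := Nat.le_ceil (T / (2*p))
    have h2 : T / (2*p) * (2*p) ≤ (N:ℝ) * (2*p) :=
      mul_le_mul_of_nonneg_right h1 (by linarith)
    rw [div_mul_cancel₀ _ (by positivity : (2:ℝ)*p ≠ 0)] at h2
    linarith
  set a : ℕ → ℝ := fun m => 2*(m:ℝ)*p with hadef
  have ha0 : a 0 = 0 := by norm_num [hadef]
  have hsum_eq : (∑ m ∈ Finset.range N, ∫ τ in (a m)..(a (m+1)), G τ * Real.sin (k * τ))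
      = ∫ τ in (a 0)..(a N), G τ * Real.sin (k * τ) :=
    intervalIntegral.sum_integral_adjacent_intervals (fun i _ => hint _ _)
  have hterm_nonneg : ∀ m : ℕ, 0 ≤ ∫ τ in (a m)..(a (m+1)), G τ * Real.sin (k * τ) := by
    intro m
    rw [show a m = 0 + 2*(m:ℝ)*p by simp [hadef],
      show a (m+1) = 2*p + 2*(m:ℝ)*p by simp [hadef]; push_cast; ring]
    exact nonneg m
  have hterm0 : 0 < ∫ τ in (a 0)..(a 1), G τ * Real.sin (k * τ) := by
    rw [ha0, show a 1 = 2*p by norm_num [hadef]]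
    exact strict0
  have hsum_pos : 0 < ∫ τ in (a 0)..(a N), G τ * Real.sin (k * τ) := by
    rw [← hsum_eq]
    exact Finset.sum_pos' (fun i _ => hterm_nonneg i) ⟨0, Finset.mem_range.2 hN1, hterm0⟩
  -- the tail beyond T is nonpositive
  have haN : a N = 2*(N:ℝ)*p := rfl
  have tail : (∫ τ in T..(a N), G τ * Real.sin (k * τ)) ≤ 0 := by
    have hEq : Set.EqOn (fun τ => G τ * Real.sin (k * τ)) (fun τ => h 0 * Real.sin (k * τ))
        (Set.uIcc T (a N)) := by
      intro τ hτ
      rw [Set.uIcc_of_le (by rw [haN]; linarith)] at hτ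
      dsimp only
      rw [Geq_ge τ hτ.1]
    rw [intervalIntegral.integral_congr hEq, intervalIntegral.integral_const_mul]
    have hsin_int : (∫ τ in T..(a N), Real.sin ((k:ℝ) * τ))
        = (k:ℝ)⁻¹ • ∫ x in ((k:ℝ)*T)..((k:ℝ)*(a N)), Real.sin x :=
      intervalIntegral.integral_comp_mul_left Real.sin (ne_of_gt hkR)
    rw [hsin_int, integral_sin]
    have hcosN : Real.cos ((k:ℝ) * a N) = 1 := by
      rw [haN, show (k:ℝ) * (2*(N:ℝ)*p) = (N:ℝ) * (2*π) by rw [← hkp]; ring]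
      exact Real.cos_nat_mul_two_pi N
    rw [hcosN, smul_eq_mul]
    have h0nn : 0 ≤ h 0 := hnonneg 0 ⟨le_rfl, hT.le⟩
    have hcle : Real.cos ((k:ℝ)*T) - 1 ≤ 0 := by
      have := Real.cos_le_one ((k:ℝ)*T); linarith
    exact mul_nonpos_of_nonneg_of_nonpos h0nn
      (mul_nonpos_of_nonneg_of_nonpos (by positivity) hcle)
  -- combine
  have hG_goal : (∫ τ in (0:ℝ)..T, h (T - τ) * Real.sin (k * τ))
      = ∫ τ in (0:ℝ)..T, G τ * Real.sin (k * τ) := by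
    apply intervalIntegral.integral_congr
    intro τ hτ
    rw [Set.uIcc_of_le hT.le] at hτ
    dsimp only
    rw [GeqIcc τ hτ]
  have hsplit : (∫ τ in (0:ℝ)..T, G τ * Real.sin (k * τ))
      + (∫ τ in T..(a N), G τ * Real.sin (k * τ))
      = ∫ τ in (0:ℝ)..(a N), G τ * Real.sin (k * τ) :=
    intervalIntegral.integral_add_adjacent_intervals (hint 0 T) (hint T (a N))
  rw [hG_goal]
  rw [ha0] at hsum_pos
  linarith
end
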